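/- Let w(n) be the number obtained by writing n in base 2 and reading the resulting digit string in base 3; that is, if n = ∑_{i≥0} ε_i·2^i with ε_i ∈ {0,1} the binary digits of n, then w(n) = ∑_{i≥0} ε_i·3^i. If γ is an irrational real number, then the sequence γ·w(n) is equidistributed modulo 1: for every nonzero integer d, (1/N)·∑_{n=0}^{N−1} e(d·γ·w(n)) → 0 as N → ∞. -/

import Mathlib

open Filter

/-- `e x = exp (2 π i x)`. -/
noncomputable def expCirc (x : ℝ) : ℂ := Complex.exp (2 * Real.pi * Complex.I * x)

/-- `w n` is obtained by writing `n` in base 2 and reading the digit string in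
base 3: if `n = ∑ εᵢ 2^i` with `εᵢ ∈ {0,1}`, then `w n = ∑ εᵢ 3^i`. -/
def baseTwoReadThree (n : ℕ) : ℕ := Nat.ofDigits 3 (Nat.digits 2 n)

/-!
Split `S N = ∑_{n<N} e(θ w n)` at the leading binary digit of `N`: since
`w (2^k + r) = 3^k + w r` for `r < 2^k`, one gets `S (2^k) = P k := ∏_{i<k} (1 + e(θ 3^i))` and
`‖S N‖ ≤ ∑_{i ≤ log₂ N} ‖P i‖`. As `‖1 + e x‖ = 2 |cos (π x)| ≤ 2 (1 - 2 δ(x)²)`, where `δ(x)` is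
the distance from `x` to `ℤ`, we get `‖P k‖ ≤ 2^k exp (-2 ∑_{i<k} δ(θ 3^i)²)`. For irrational `θ`
the distances `δ(θ 3^i)` do not tend to `0` (otherwise eventually `δ(θ 3^(i+1)) = 3 δ(θ 3^i)`),
so the series diverges, `P k = o(2^k)`, and therefore `S N = o(N)`.
-/

open Asymptotics Finset

lemma baseTwoReadThree_add_two_mul {c : ℕ} (hc : c < 2) (m : ℕ) :
    baseTwoReadThree (c + 2 * m) = c + 3 * baseTwoReadThree m := by
  rcases Nat.eq_zero_or_pos m with rfl | hm
  · interval_cases c <;> simp [baseTwoReadThree]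
  · rw [baseTwoReadThree, Nat.digits_add 2 one_lt_two c m hc (Or.inr hm.ne'), Nat.ofDigits_cons,
      baseTwoReadThree]

lemma baseTwoReadThree_add_two_pow_mul {k b : ℕ} (hb : b < 2 ^ k) (m : ℕ) :
    baseTwoReadThree (b + 2 ^ k * m) = baseTwoReadThree b + 3 ^ k * baseTwoReadThree m := by
  induction k generalizing b with
  | zero => simp_all [baseTwoReadThree]
  | succ k ih =>
    have hb2 : b % 2 < 2 := b.mod_lt two_pos
    rw [show b + 2 ^ (k + 1) * m = b % 2 + 2 * (b / 2 + 2 ^ k * m) by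
      rw [pow_succ, mul_comm _ 2, mul_assoc]; omega,
      baseTwoReadThree_add_two_mul hb2, ih (by omega), ← Nat.mod_add_div b 2,
      baseTwoReadThree_add_two_mul hb2, Nat.mod_add_div]
    ring

lemma expCirc_add (x y : ℝ) : expCirc (x + y) = expCirc x * expCirc y := by
  simp only [expCirc, ← Complex.exp_add]
  push_cast
  ring_nf

lemma norm_expCirc (x : ℝ) : ‖expCirc x‖ = 1 := by
  rw [expCirc, show 2 * Real.pi * Complex.I * x = ((2 * Real.pi * x : ℝ) : ℂ) * Complex.I by
    push_cast; ring]
  exact Complex.norm_exp_ofReal_mul_I _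

open Real in
lemma norm_one_add_expCirc (x : ℝ) : ‖1 + expCirc x‖ = 2 * |cos (π * x)| := by
  have : 1 + expCirc x = expCirc (x / 2) * (2 * Complex.cos (π * x)) := by
    rw [Complex.two_cos, mul_add, expCirc, expCirc, ← Complex.exp_add, ← Complex.exp_add]
    push_cast
    ring_nf
    rw [Complex.exp_zero, add_comm]
  rw [this, norm_mul, norm_expCirc, one_mul, norm_mul, ← Complex.ofReal_ofNat,
    ← Complex.ofReal_mul, ← Complex.ofReal_cos, Complex.norm_real, Complex.norm_real]
  simp

open Real in
lemma abs_cos_pi_mul_le (x : ℝ) : |cos (π * x)| ≤ 1 - 2 * (x - round x) ^ 2 := by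
  set y := x - round x
  have hy : |y| ≤ 1 / 2 := abs_sub_round x
  have hπy : |π * y| ≤ π / 2 := by
    rw [abs_mul, abs_of_pos pi_pos]; nlinarith [pi_pos]
  have hx : π * x = π * y + round x * π := by simp only [y]; ring
  rw [hx, cos_add_int_mul_pi, abs_mul, abs_zpow, abs_neg, abs_one, one_zpow, one_mul,
    abs_of_nonneg (cos_nonneg_of_mem_Icc (abs_le.1 hπy))]
  calc cos (π * y) ≤ 1 - 2 / π ^ 2 * (π * y) ^ 2 := cos_le_one_sub_mul_cos_sq (by linarith [pi_pos])
    _ = 1 - 2 * y ^ 2 := by field_simp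

lemma Irrational.not_tendsto_mul_pow_sub_round {θ : ℝ} (hθ : Irrational θ) {q : ℕ} (hq : 0 < q) :
    ¬ Tendsto (fun n : ℕ => θ * q ^ n - round (θ * q ^ n)) atTop (nhds 0) := by
  intro h
  set ε := fun n : ℕ => θ * q ^ n - round (θ * q ^ n)
  have hq' : (0 : ℝ) < q := Nat.cast_pos.2 hq
  have hsmall : ∀ᶠ n in atTop, |ε n| < 1 / (q + 1) :=
    (tendsto_zero_iff_abs_tendsto_zero _).1 h |>.eventually (gt_mem_nhds (by positivity))
  -- `q * ε n - ε (n + 1)` is an integer of absolute value `< 1`, hence zero.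
  have hstep : ∀ᶠ n in atTop, ε (n + 1) = q * ε n := by
    filter_upwards [hsmall, (tendsto_add_atTop_nat 1).eventually hsmall] with n h0 h1
    have hint :
        q * ε n - ε (n + 1) = ((round (θ * q ^ (n + 1)) - q * round (θ * q ^ n) : ℤ) : ℝ) := by
      simp only [ε]; push_cast; ring
    have hlt : |q * ε n - ε (n + 1)| < 1 := by
      calc |q * ε n - ε (n + 1)| ≤ q * |ε n| + |ε (n + 1)| := by
            simpa [abs_mul, abs_of_pos hq'] using abs_sub (q * ε n) (ε (n + 1))
        _ < q * (1 / (q + 1)) + 1 / (q + 1) := by gcongr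
        _ = 1 := by field_simp
    rw [hint, ← Int.cast_abs, ← Int.cast_one, Int.cast_lt, Int.abs_lt_one_iff] at hlt
    rw [hlt, Int.cast_zero, sub_eq_zero] at hint
    exact hint.symm
  obtain ⟨N, hN⟩ := eventually_atTop.1 hstep
  have hmono : ∀ n ≥ N, |ε N| ≤ |ε n| := by
    refine Nat.le_induction le_rfl fun n hn ih => ?_
    rw [hN n hn, abs_mul, abs_of_pos hq']
    nlinarith [(Nat.one_le_cast (α := ℝ)).2 hq, abs_nonneg (ε n)]
  have hzero : ε N = 0 := abs_nonpos_iff.1 <|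
    ge_of_tendsto (by simpa using h.abs) (eventually_atTop.2 ⟨N, hmono⟩)
  refine (hθ.mul_natCast (pow_ne_zero N hq.ne')).ne_int (round (θ * q ^ N)) ?_
  push_cast
  exact sub_eq_zero.1 hzero

namespace BaseTwoReadThree

noncomputable def expSum (θ : ℝ) (N : ℕ) : ℂ :=
  ∑ n ∈ range N, expCirc (θ * baseTwoReadThree n)

noncomputable def expProd (θ : ℝ) (k : ℕ) : ℂ :=
  ∏ i ∈ range k, (1 + expCirc (θ * 3 ^ i))

variable (θ : ℝ)

lemma expSum_two_pow_add {k r : ℕ} (hr : r ≤ 2 ^ k) :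
    expSum θ (2 ^ k + r) = expSum θ (2 ^ k) + expCirc (θ * 3 ^ k) * expSum θ r := by
  simp only [expSum, sum_range_add, mul_sum]
  congr 1
  refine sum_congr rfl fun n hn => ?_
  have := baseTwoReadThree_add_two_pow_mul (lt_of_lt_of_le (mem_range.1 hn) hr) 1
  rw [mul_one, add_comm n, show baseTwoReadThree 1 = 1 by rfl] at this
  rw [this, ← expCirc_add]
  push_cast
  ring_nf

lemma expSum_two_pow (k : ℕ) : expSum θ (2 ^ k) = expProd θ k := by
  induction k with
  | zero => simp [expSum, expProd, baseTwoReadThree, expCirc]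
  | succ k ih =>
    rw [pow_succ, mul_two, expSum_two_pow_add θ le_rfl, ih, expProd, expProd, prod_range_succ]
    ring

lemma norm_expSum_le {k N : ℕ} (hN : N < 2 ^ k) :
    ‖expSum θ N‖ ≤ ∑ i ∈ range k, ‖expProd θ i‖ := by
  induction k generalizing N with
  | zero => simp_all [expSum]
  | succ k ih =>
    rw [sum_range_succ]
    rcases lt_or_ge N (2 ^ k) with hlt | hge
    · linarith [ih hlt, norm_nonneg (expProd θ k)]
    · obtain ⟨r, rfl⟩ := Nat.exists_eq_add_of_le hge
      have hr : r < 2 ^ k := by rw [pow_succ] at hN; omega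
      rw [expSum_two_pow_add θ hr.le, expSum_two_pow]
      calc ‖expProd θ k + expCirc (θ * 3 ^ k) * expSum θ r‖
          ≤ ‖expProd θ k‖ + ‖expSum θ r‖ := by
            simpa [norm_expCirc] using norm_add_le (expProd θ k) (expCirc (θ * 3 ^ k) * expSum θ r)
        _ ≤ _ := by linarith [ih hr]

lemma norm_expProd_le (k : ℕ) :
    ‖expProd θ k‖ ≤ 2 ^ k * Real.exp (-∑ i ∈ range k, 2 * (θ * 3 ^ i - round (θ * 3 ^ i)) ^ 2) := by
  rw [expProd, norm_prod, ← sum_neg_distrib, Real.exp_sum, ← card_range k, ← prod_const,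
    card_range, ← prod_mul_distrib]
  refine prod_le_prod (fun _ _ => norm_nonneg _) fun i _ => ?_
  rw [norm_one_add_expCirc]
  have hcos := abs_cos_pi_mul_le (θ * 3 ^ i)
  have hexp := Real.one_sub_le_exp_neg (2 * (θ * 3 ^ i - round (θ * 3 ^ i)) ^ 2)
  linarith

variable {θ}

lemma tendsto_sum_sq_sub_round (hθ : Irrational θ) :
    Tendsto (fun k => ∑ i ∈ range k, 2 * (θ * 3 ^ i - round (θ * 3 ^ i)) ^ 2) atTop atTop := by
  refine (not_summable_iff_tendsto_nat_atTop_of_nonneg fun i => by positivity).1 fun hs => ?_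
  refine hθ.not_tendsto_mul_pow_sub_round (q := 3) three_pos ?_
  have := (hs.tendsto_atTop_zero.div_const 2).sqrt
  simp only [mul_div_cancel_left₀ _ (two_ne_zero' ℝ), zero_div, Real.sqrt_zero,
    Real.sqrt_sq_eq_abs] at this
  push_cast
  exact (tendsto_zero_iff_abs_tendsto_zero _).2 this

lemma isLittleO_expProd (hθ : Irrational θ) : expProd θ =o[atTop] fun k => (2 : ℝ) ^ k := by
  have hexp := Real.tendsto_exp_neg_atTop_nhds_zero.comp (tendsto_sum_sq_sub_round hθ)
  calc expProd θ
      =O[atTop] fun k =>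
          2 ^ k * Real.exp (-∑ i ∈ range k, 2 * (θ * 3 ^ i - round (θ * 3 ^ i)) ^ 2) :=
        isBigO_of_le _ fun k => (norm_expProd_le θ k).trans (le_abs_self _)
    _ =o[atTop] fun k => (2 : ℝ) ^ k * 1 :=
        (isBigO_refl _ _).mul_isLittleO ((isLittleO_one_iff ℝ).2 hexp)
    _ = fun k => (2 : ℝ) ^ k := by simp

lemma isLittleO_sum_norm_expProd (hθ : Irrational θ) :
    (fun k => ∑ i ∈ range k, ‖expProd θ i‖) =o[atTop] fun k => (2 : ℝ) ^ k := by
  have hgeom (k : ℕ) : ∑ i ∈ range k, (2 : ℝ) ^ i = 2 ^ k - 1 := by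
    rw [geom_sum_eq (by norm_num : (2 : ℝ) ≠ 1)]; norm_num
  have hsum := (isLittleO_expProd hθ).norm_left.sum_range (fun k => by positivity) <| by
    simpa only [hgeom, sub_eq_add_neg] using tendsto_atTop_add_const_right _ (-1)
      (tendsto_pow_atTop_atTop_of_one_lt one_lt_two)
  refine hsum.trans_isBigO (isBigO_of_le _ fun k => ?_)
  simp only [hgeom, Real.norm_eq_abs, abs_pow, abs_two]
  rw [abs_of_nonneg (by simpa using one_le_pow₀ (one_le_two (α := ℝ)) (n := k))]
  linarith

lemma isLittleO_expSum (hθ : Irrational θ) : expSum θ =o[atTop] fun N => (N : ℂ) := by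
  have hlog : Tendsto (fun N => Nat.log 2 N + 1) atTop atTop :=
    tendsto_atTop_atTop.2 fun b => ⟨2 ^ b, fun N hN => (Nat.le_log_of_pow_le one_lt_two hN).trans
      (Nat.le_succ _)⟩
  calc expSum θ
      =O[atTop] fun N => ∑ i ∈ range (Nat.log 2 N + 1), ‖expProd θ i‖ :=
        isBigO_of_le _ fun N => (norm_expSum_le θ (Nat.lt_pow_succ_log_self one_lt_two N)).trans
          (le_abs_self _)
    _ =o[atTop] fun N => (2 : ℝ) ^ (Nat.log 2 N + 1) :=
        (isLittleO_sum_norm_expProd hθ).comp_tendsto hlog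
    _ =O[atTop] fun N => (N : ℂ) := by
        refine IsBigO.of_bound 2 <| (eventually_ne_atTop 0).mono fun N hN => ?_
        rw [Complex.norm_natCast, norm_pow, Real.norm_two, pow_succ, mul_comm]
        gcongr
        exact_mod_cast Nat.pow_log_le_self 2 hN

end BaseTwoReadThree

/-- If `γ` is irrational, then `γ · w n` is equidistributed
modulo 1: for every nonzero integer `d`, `(1/N) ∑_{n=0}^{N-1} e (d γ w n) → 0`. -/
theorem baseTwoReadThree_equidistributed (γ : ℝ) (hγ : Irrational γ) :
    ∀ d : ℤ, d ≠ 0 →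
      Tendsto
        (fun N : ℕ => (N : ℂ)⁻¹ * ∑ n ∈ Finset.range N,
          expCirc ((d : ℝ) * γ * (baseTwoReadThree n : ℝ)))
        atTop (nhds 0) := by
  intro d hd
  refine (BaseTwoReadThree.isLittleO_expSum (hγ.intCast_mul hd)).tendsto_div_nhds_zero.congr
    fun N => ?_
  rw [div_eq_inv_mul, BaseTwoReadThree.expSum]
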